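/- arXiv:2405.09309 — 2 statements merged into one kernel-verified Lean document; each statement's English description precedes it below -/
import Mathlib

section
/- Fix an integer q ≥ 2 and a real β > 0. For every sequence of positive reals R_i → ∞ and every sequence of (n_i, l_i, M_i) ID codes for the q-ary uniform permutation channel with n_i → ∞, l_i ≤ β·n_i for all i, and M_i ≥ 2^{R_i · n_i^{l_i(q−1)}}, the error probabilities satisfy liminf_{i→∞} (λ_{1,i} + λ_{2,i}) ≥ 1. -/
open Finset

/-- The type class of `x`: all vectors obtained from `x` by permuting its coordinates. -/
def typeClass (q n : ℕ) (x : Fin n → Fin q) : Finset (Fin n → Fin q) :=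
  Finset.univ.filter fun y => ∃ σ : Equiv.Perm (Fin n), y = fun k => x (σ k)

/-- `Q` is a probability mass function on a finite type. -/
def IsPMF {α : Type*} [Fintype α] (Q : α → ℝ) : Prop :=
  (∀ a, 0 ≤ Q a) ∧ ∑ a, Q a = 1

/-- False-acceptance probability `λ_{i→j}` of an `(n, M)` ID code for the `q`-ary
uniform permutation channel. -/
noncomputable def lamFA (q n : ℕ) {M : ℕ} (Q : Fin M → (Fin n → Fin q) → ℝ)
    (D : Fin M → Finset (Fin n → Fin q)) (i j : Fin M) : ℝ :=
  ∑ x, Q i x * (((typeClass q n x ∩ D j).card : ℝ) / ((typeClass q n x).card : ℝ))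

/-- Missed-detection probability `λ_{i↛i}` of an `(n, M)` ID code for the `q`-ary
uniform permutation channel. -/
noncomputable def lamMD (q n : ℕ) {M : ℕ} (Q : Fin M → (Fin n → Fin q) → ℝ)
    (D : Fin M → Finset (Fin n → Fin q)) (i : Fin M) : ℝ :=
  ∑ x, Q i x * (((typeClass q n x \ D i).card : ℝ) / ((typeClass q n x).card : ℝ))


/-- Type class of an `l`-tuple of blocks: the product of the blockwise type classes. -/
def typeClassL (q n l : ℕ) (x : Fin l → Fin n → Fin q) : Finset (Fin l → Fin n → Fin q) :=
  Finset.univ.filter fun y => ∀ s, y s ∈ typeClass q n (x s)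

/-- False-acceptance probability `λ_{i→j}` of an `(n, l, M)` (multishot) ID code for the
`q`-ary uniform permutation channel. -/
noncomputable def lamFAL (q n l : ℕ) {M : ℕ} (Q : Fin M → (Fin l → Fin n → Fin q) → ℝ)
    (D : Fin M → Finset (Fin l → Fin n → Fin q)) (i j : Fin M) : ℝ :=
  ∑ x, Q i x * (((typeClassL q n l x ∩ D j).card : ℝ) / ((typeClassL q n l x).card : ℝ))

/-- Missed-detection probability `λ_{i↛i}` of an `(n, l, M)` (multishot) ID code for the
`q`-ary uniform permutation channel. -/
noncomputable def lamMDL (q n l : ℕ) {M : ℕ} (Q : Fin M → (Fin l → Fin n → Fin q) → ℝ)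
    (D : Fin M → Finset (Fin l → Fin n → Fin q)) (i : Fin M) : ℝ :=
  ∑ x, Q i x * (((typeClassL q n l x \ D i).card : ℝ) / ((typeClassL q n l x).card : ℝ))

/-- Type-I error `λ_1 = max_i λ_{i↛i}` of a multishot ID code, expressed as a supremum. -/
noncomputable def lamIL (q n l : ℕ) {M : ℕ} (Q : Fin M → (Fin l → Fin n → Fin q) → ℝ)
    (D : Fin M → Finset (Fin l → Fin n → Fin q)) : ℝ :=
  ⨆ i, lamMDL q n l Q D i

/-- Type-II error `λ_2 = max_{i≠j} λ_{i→j}` of a multishot ID code, expressed as a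
supremum. -/
noncomputable def lamIIL (q n l : ℕ) {M : ℕ} (Q : Fin M → (Fin l → Fin n → Fin q) → ℝ)
    (D : Fin M → Finset (Fin l → Fin n → Fin q)) : ℝ :=
  ⨆ i, ⨆ j, ⨆ (_ : i ≠ j), lamFAL q n l Q D i j

/-!
The acceptance probability of a decoding set `D` on an input `x` depends only on the blockwise
type of `x`, and for `q = p + 1` symbols the type of a block of length `n` is determined by the
counts of the first `p` symbols, so there are at most `(n + 1) ^ (l * p)` types.  Quantising the
acceptance probabilities to `K + 1` levels, only `(K + 1) ^ ((n + 1) ^ (l * p))` quantised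
profiles exist; as soon as `M` exceeds this, two messages `i ≠ j` have acceptance profiles
within `1 / K` of each other everywhere, which forces `λ_{i↛i} + λ_{i→j} ≥ 1 - 1 / K`.  Since
`(n + 1) ^ (l * p) ≤ exp (β * p) * n ^ (l * p)` when `l ≤ β * n`, the rate hypothesis with
`R_i → ∞` makes `M_i` exceed this bound eventually, for every fixed `K`.
-/

open Finset Filter Real

namespace PermutationChannel

section TypeClass

variable {ι α : Type*} [Fintype ι] [DecidableEq α]

def symbolCount (x : ι → α) (v : α) : ℕ := #{k | x k = v}

lemma symbolCount_eq_card_subtype (x : ι → α) (v : α) :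
    symbolCount x v = Fintype.card {k // x k = v} := by
  simp [symbolCount, Fintype.card_subtype]

lemma exists_perm_eq_comp_iff (x y : ι → α) :
    (∃ σ : Equiv.Perm ι, y = x ∘ σ) ↔ ∀ v, symbolCount x v = symbolCount y v := by
  simp only [symbolCount_eq_card_subtype]
  constructor
  · rintro ⟨σ, rfl⟩ v
    exact (Fintype.card_congr (σ.subtypeEquiv fun _ => Iff.rfl)).symm
  · intro h
    have e : ∀ v, {k // y k = v} ≃ {k // x k = v} := fun v => Fintype.equivOfCardEq (h v).symm
    refine ⟨(Equiv.sigmaFiberEquiv y).symm.trans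
      ((Equiv.sigmaCongrRight e).trans (Equiv.sigmaFiberEquiv x)), funext fun k => ?_⟩
    exact ((e (y k) ⟨k, rfl⟩).prop).symm

lemma symbolCount_le (x : ι → α) (v : α) : symbolCount x v ≤ Fintype.card ι :=
  card_le_univ _

lemma sum_symbolCount [Fintype α] (x : ι → α) : ∑ v, symbolCount x v = Fintype.card ι := by
  simpa [symbolCount] using (card_eq_sum_card_fiberwise (f := x) (s := univ) (t := univ)
    fun k _ => mem_univ (x k)).symm

end TypeClass

lemma mem_typeClass_iff {q n : ℕ} {x y : Fin n → Fin q} :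
    y ∈ typeClass q n x ↔ ∀ v, symbolCount x v = symbolCount y v := by
  rw [← exists_perm_eq_comp_iff]
  simp [typeClass, Function.comp_def]

lemma self_mem_typeClassL {q n l : ℕ} (x : Fin l → Fin n → Fin q) : x ∈ typeClassL q n l x := by
  simp [typeClassL, mem_typeClass_iff]

lemma symbolCount_eq_of_castSucc {ι : Type*} [Fintype ι] {p : ℕ} {x y : ι → Fin (p + 1)}
    (h : ∀ a : Fin p, symbolCount x a.castSucc = symbolCount y a.castSucc) (v : Fin (p + 1)) :
    symbolCount x v = symbolCount y v := by
  have hx := sum_symbolCount x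
  have hy := sum_symbolCount y
  rw [Fin.sum_univ_castSucc, Fintype.sum_congr _ _ h] at hx
  rw [Fin.sum_univ_castSucc] at hy
  induction v using Fin.lastCases with
  | last => omega
  | cast a => exact h a

def typeProfile (p n l : ℕ) (x : Fin l → Fin n → Fin (p + 1)) : Fin l → Fin p → Fin (n + 1) :=
  fun s a => ⟨symbolCount (x s) a.castSucc, Nat.lt_succ_of_le ((symbolCount_le _ _).trans_eq (Fintype.card_fin n))⟩

lemma typeClassL_eq_of_typeProfile_eq {p n l : ℕ} {x y : Fin l → Fin n → Fin (p + 1)}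
    (h : typeProfile p n l x = typeProfile p n l y) :
    typeClassL (p + 1) n l x = typeClassL (p + 1) n l y := by
  have hcount : ∀ s, ∀ v, symbolCount (x s) v = symbolCount (y s) v := fun s =>
    symbolCount_eq_of_castSucc fun a => congrArg Fin.val (congrFun (congrFun h s) a)
  ext z
  simp only [typeClassL, mem_filter, mem_univ, true_and, mem_typeClass_iff, hcount]

section Errors

variable {q n l M : ℕ} {Q : Fin M → (Fin l → Fin n → Fin q) → ℝ}
  {D : Fin M → Finset (Fin l → Fin n → Fin q)}

noncomputable def acceptProb (q n l : ℕ) (E : Finset (Fin l → Fin n → Fin q))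
    (x : Fin l → Fin n → Fin q) : ℝ :=
  (#(typeClassL q n l x ∩ E) : ℝ) / #(typeClassL q n l x)

lemma acceptProb_nonneg (E : Finset (Fin l → Fin n → Fin q)) (x : Fin l → Fin n → Fin q) :
    0 ≤ acceptProb q n l E x := by
  unfold acceptProb; positivity

lemma acceptProb_le_one (E : Finset (Fin l → Fin n → Fin q)) (x : Fin l → Fin n → Fin q) :
    acceptProb q n l E x ≤ 1 :=
  div_le_one_of_le₀ (mod_cast card_le_card inter_subset_left) (Nat.cast_nonneg _)

lemma acceptProb_eq_of_typeProfile_eq {p : ℕ} (E : Finset (Fin l → Fin n → Fin (p + 1)))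
    {x y : Fin l → Fin n → Fin (p + 1)} (h : typeProfile p n l x = typeProfile p n l y) :
    acceptProb (p + 1) n l E x = acceptProb (p + 1) n l E y := by
  simp only [acceptProb, typeClassL_eq_of_typeProfile_eq h]

lemma lamFAL_eq_sum (i j : Fin M) :
    lamFAL q n l Q D i j = ∑ x, Q i x * acceptProb q n l (D j) x := rfl

lemma lamMDL_eq_sum (i : Fin M) :
    lamMDL q n l Q D i = ∑ x, Q i x * (1 - acceptProb q n l (D i) x) := by
  refine sum_congr rfl fun x _ => congrArg (Q i x * ·) ?_
  have hcard : (0 : ℝ) < #(typeClassL q n l x) := mod_cast card_pos.2 ⟨x, self_mem_typeClassL x⟩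
  rw [acceptProb, eq_sub_iff_add_eq, ← add_div, div_eq_one_iff_eq hcard.ne', ← Nat.cast_add,
    card_sdiff_add_card_inter]

lemma sum_mul_le_one {α : Type*} [Fintype α] {P : α → ℝ} (hP : IsPMF P) {r : α → ℝ}
    (hr : ∀ a, r a ≤ 1) : ∑ a, P a * r a ≤ 1 :=
  calc ∑ a, P a * r a ≤ ∑ a, P a := sum_le_sum fun a _ => mul_le_of_le_one_right (hP.1 a) (hr a)
    _ = 1 := hP.2

lemma lamIL_le_one (hQ : ∀ i, IsPMF (Q i)) : lamIL q n l Q D ≤ 1 :=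
  Real.iSup_le (fun i => (lamMDL_eq_sum i).trans_le <| sum_mul_le_one (hQ i) fun x =>
    sub_le_self _ (acceptProb_nonneg _ x)) zero_le_one

lemma lamIIL_le_one (hQ : ∀ i, IsPMF (Q i)) : lamIIL q n l Q D ≤ 1 :=
  Real.iSup_le (fun i => Real.iSup_le (fun j => Real.iSup_le (fun _ =>
    (lamFAL_eq_sum i j).trans_le <| sum_mul_le_one (hQ i) fun x => acceptProb_le_one _ x)
    zero_le_one) zero_le_one) zero_le_one

lemma lamMDL_le_lamIL (i : Fin M) : lamMDL q n l Q D i ≤ lamIL q n l Q D :=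
  le_ciSup (Set.finite_range _).bddAbove i

lemma lamFAL_le_lamIIL {i j : Fin M} (hij : i ≠ j) : lamFAL q n l Q D i j ≤ lamIIL q n l Q D :=
  le_ciSup_of_le (Set.finite_range _).bddAbove i <|
    le_ciSup_of_le (Set.finite_range _).bddAbove j
      (ciSup_pos (f := fun _ => lamFAL q n l Q D i j) hij).ge

lemma one_sub_le_lamMDL_add_lamFAL {i j : Fin M} (hQ : IsPMF (Q i)) {ε : ℝ}
    (hclose : ∀ x, |acceptProb q n l (D i) x - acceptProb q n l (D j) x| ≤ ε) :
    1 - ε ≤ lamMDL q n l Q D i + lamFAL q n l Q D i j := by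
  rw [lamMDL_eq_sum, lamFAL_eq_sum, ← sum_add_distrib]
  calc 1 - ε = ∑ x, Q i x * (1 - ε) := by rw [← sum_mul, hQ.2, one_mul]
    _ ≤ _ := sum_le_sum fun x _ => by
      rw [← mul_add]
      exact mul_le_mul_of_nonneg_left (by linarith [(abs_le.1 (hclose x)).2]) (hQ.1 x)

end Errors

lemma abs_sub_le_of_natFloor_mul_eq {K : ℕ} (hK : 0 < K) {a b : ℝ} (ha : 0 ≤ a) (hb : 0 ≤ b)
    (h : ⌊K * a⌋₊ = ⌊K * b⌋₊) : |a - b| ≤ 1 / K := by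
  have hKpos : (0 : ℝ) < K := mod_cast hK
  have hfloor : ⌊K * a⌋ = ⌊K * b⌋ := by
    rw [← Int.natCast_floor_eq_floor (by positivity), ← Int.natCast_floor_eq_floor (by positivity), h]
  have := (Int.abs_sub_lt_one_of_floor_eq_floor hfloor).le
  rwa [← mul_sub, abs_mul, Nat.abs_cast, ← le_div_iff₀' hKpos] at this

lemma exists_ne_forall_abs_sub_le {ι X Θ : Type*} [Fintype ι] [Fintype Θ] [Nonempty X]
    (τ : X → Θ) (f : ι → X → ℝ) (hf₀ : ∀ i x, 0 ≤ f i x) (hf₁ : ∀ i x, f i x ≤ 1)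
    (hτ : ∀ i x y, τ x = τ y → f i x = f i y) {K : ℕ} (hK : 0 < K)
    (hcard : (K + 1) ^ Fintype.card Θ < Fintype.card ι) :
    ∃ i j, i ≠ j ∧ ∀ x, |f i x - f j x| ≤ 1 / K := by
  classical
  let level : ι → Θ → Fin (K + 1) := fun i θ =>
    ⟨⌊K * f i (Function.invFun τ θ)⌋₊, Nat.lt_succ_of_le <| Nat.floor_le_of_le <|
      mul_le_of_le_one_right (Nat.cast_nonneg K) (hf₁ _ _)⟩
  obtain ⟨i, j, hij, hlevel⟩ := Fintype.exists_ne_map_eq_of_card_lt level (by simpa using hcard)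
  refine ⟨i, j, hij, fun x => ?_⟩
  have hx : τ (Function.invFun τ (τ x)) = τ x := Function.invFun_eq ⟨x, rfl⟩
  rw [← hτ i _ _ hx, ← hτ j _ _ hx]
  exact abs_sub_le_of_natFloor_mul_eq hK (hf₀ _ _) (hf₀ _ _)
    (congrArg Fin.val (congrFun hlevel (τ x)))

theorem one_sub_one_div_le_lamIL_add_lamIIL {p n l M K : ℕ} (hK : 0 < K)
    {Q : Fin M → (Fin l → Fin n → Fin (p + 1)) → ℝ}
    {D : Fin M → Finset (Fin l → Fin n → Fin (p + 1))} (hQ : ∀ i, IsPMF (Q i))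
    (hM : (K + 1) ^ ((n + 1) ^ (l * p)) < M) :
    1 - 1 / K ≤ lamIL (p + 1) n l Q D + lamIIL (p + 1) n l Q D := by
  obtain ⟨i, j, hij, hclose⟩ := exists_ne_forall_abs_sub_le (typeProfile p n l)
    (fun i => acceptProb (p + 1) n l (D i)) (fun i => acceptProb_nonneg (D i))
    (fun i => acceptProb_le_one (D i)) (fun i _ _ => acceptProb_eq_of_typeProfile_eq (D i)) hK
    (by simpa [← pow_mul, mul_comm l p] using hM)
  calc 1 - 1 / (K : ℝ) ≤ lamMDL (p + 1) n l Q D i + lamFAL (p + 1) n l Q D i j :=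
        one_sub_le_lamMDL_add_lamFAL (hQ i) hclose
    _ ≤ _ := add_le_add (lamMDL_le_lamIL i) (lamFAL_le_lamIIL hij)

lemma add_one_pow_le_exp_mul_pow {n m : ℕ} {c : ℝ} (hn : 0 < n) (hm : (m : ℝ) ≤ c * n) :
    ((n : ℝ) + 1) ^ m ≤ exp c * (n : ℝ) ^ m := by
  have hnR : (0 : ℝ) < n := mod_cast hn
  calc ((n : ℝ) + 1) ^ m = (n : ℝ) ^ m * (1 + 1 / n) ^ m := by
        rw [← mul_pow, mul_add, mul_one_div_cancel hnR.ne', mul_one]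
    _ ≤ (n : ℝ) ^ m * exp (1 / n) ^ m := by
        gcongr
        linarith [add_one_le_exp (1 / (n : ℝ))]
    _ = (n : ℝ) ^ m * exp (m / n) := by rw [← exp_nat_mul, mul_one_div]
    _ ≤ (n : ℝ) ^ m * exp c := by
        gcongr
        rwa [div_le_iff₀ hnR]
    _ = exp c * (n : ℝ) ^ m := mul_comm _ _

lemma natCast_pow_lt_two_rpow {a N : ℕ} (ha : 0 < a) {x : ℝ} (h : N * logb 2 a < x) :
    ((a ^ N : ℕ) : ℝ) < 2 ^ x :=
  calc ((a ^ N : ℕ) : ℝ) = (2 : ℝ) ^ (N * logb 2 a) := by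
        rw [mul_comm, rpow_mul zero_le_two, rpow_logb two_pos (by norm_num) (mod_cast ha),
          rpow_natCast, Nat.cast_pow]
    _ < 2 ^ x := rpow_lt_rpow_of_exponent_lt one_lt_two h

lemma pow_lt_of_exp_mul_logb_lt {p n l M K : ℕ} {β R : ℝ} (hn : 0 < n) (hl : (l : ℝ) ≤ β * n)
    (hR : exp (β * p) * logb 2 (K + 1) < R) (hM : (2 : ℝ) ^ (R * (n : ℝ) ^ (l * p)) ≤ M) :
    (K + 1) ^ ((n + 1) ^ (l * p)) < M := by
  have htypes : ((n : ℝ) + 1) ^ (l * p) ≤ exp (β * p) * (n : ℝ) ^ (l * p) :=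
    add_one_pow_le_exp_mul_pow hn (by push_cast; nlinarith [(Nat.cast_nonneg p : (0 : ℝ) ≤ p)])
  have hlog : 0 ≤ logb 2 ((K : ℝ) + 1) := logb_nonneg one_lt_two (by simp)
  have hnpow : (1 : ℝ) ≤ (n : ℝ) ^ (l * p) := one_le_pow₀ (mod_cast hn)
  have hexponent : (((n + 1) ^ (l * p) : ℕ) : ℝ) * logb 2 ((K + 1 : ℕ) : ℝ) < R * n ^ (l * p) :=
    calc _ ≤ exp (β * p) * n ^ (l * p) * logb 2 ((K : ℝ) + 1) := by
          push_cast
          exact mul_le_mul_of_nonneg_right htypes hlog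
      _ = n ^ (l * p) * (exp (β * p) * logb 2 ((K : ℝ) + 1)) := by ring
      _ < n ^ (l * p) * R := mul_lt_mul_of_pos_left hR (by linarith)
      _ = R * n ^ (l * p) := mul_comm _ _
  exact_mod_cast (natCast_pow_lt_two_rpow K.succ_pos hexponent).trans_le hM

end PermutationChannel

open PermutationChannel

theorem multiShotStrongConverse_general (q : ℕ) (hq : 2 ≤ q) (β : ℝ)
    (R : ℕ → ℝ)
    (hR : Filter.Tendsto R Filter.atTop Filter.atTop)
    (n : ℕ → ℕ) (hn : Filter.Tendsto n Filter.atTop Filter.atTop)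
    (l : ℕ → ℕ)
    (hl : ∀ i, (l i : ℝ) ≤ β * (n i : ℝ))
    (M : ℕ → ℕ)
    (Q : ∀ i, Fin (M i) → (Fin (l i) → Fin (n i) → Fin q) → ℝ)
    (D : ∀ i, Fin (M i) → Finset (Fin (l i) → Fin (n i) → Fin q))
    (hQ : ∀ i j, IsPMF (Q i j))
    (hM : ∀ i, (2 : ℝ) ^ (R i * (n i : ℝ) ^ (l i * (q - 1))) ≤ (M i : ℝ)) :
    1 ≤ Filter.liminf
      (fun i => lamIL q (n i) (l i) (Q i) (D i) + lamIIL q (n i) (l i) (Q i) (D i))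
      Filter.atTop := by
  obtain ⟨p, rfl⟩ : ∃ p, q = p + 1 := ⟨q - 1, by omega⟩
  refine le_of_forall_lt_imp_le_of_dense fun c hc => ?_
  obtain ⟨k, hk⟩ := exists_nat_one_div_lt (sub_pos.2 hc)
  have hbound : ∀ᶠ i in atTop, 1 - 1 / ((k + 1 : ℕ) : ℝ) ≤
      lamIL (p + 1) (n i) (l i) (Q i) (D i) + lamIIL (p + 1) (n i) (l i) (Q i) (D i) := by
    filter_upwards [hn.eventually_gt_atTop 0,
      hR.eventually_gt_atTop (exp (β * p) * logb 2 ((k + 1 : ℕ) + 1))] with i hni hRi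
    refine one_sub_one_div_le_lamIL_add_lamIIL k.succ_pos (hQ i)
      (pow_lt_of_exp_mul_logb_lt hni (hl i) hRi ?_)
    simpa using hM i
  have hbdd : ∀ i, lamIL (p + 1) (n i) (l i) (Q i) (D i) + lamIIL (p + 1) (n i) (l i) (Q i) (D i)
      ≤ 2 := fun i => by linarith [lamIL_le_one (D := D i) (hQ i), lamIIL_le_one (D := D i) (hQ i)]
  calc c ≤ 1 - 1 / ((k + 1 : ℕ) : ℝ) := by push_cast; linarith
    _ ≤ _ := le_liminf_of_le (isCoboundedUnder_ge_of_le atTop hbdd) hbound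

/-- Strong converse (multishot): for `β > 0`, `R_i → ∞`, and any sequence of
`(n_i, l_i, M_i)` ID codes for the `q`-ary uniform permutation channel with `n_i → ∞`,
`l_i ≤ β·n_i`, and `M_i ≥ 2^(R_i · n_i^(l_i(q-1)))`, one has
`liminf_i (λ_{1,i} + λ_{2,i}) ≥ 1`. -/
theorem multiShotStrongConverse (q : ℕ) (hq : 2 ≤ q) (β : ℝ) (hβ : 0 < β)
    (R : ℕ → ℝ) (hRpos : ∀ i, 0 < R i)
    (hR : Filter.Tendsto R Filter.atTop Filter.atTop)
    (n : ℕ → ℕ) (hn : Filter.Tendsto n Filter.atTop Filter.atTop)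
    (l : ℕ → ℕ) (hlpos : ∀ i, 0 < l i)
    (hl : ∀ i, (l i : ℝ) ≤ β * (n i : ℝ))
    (M : ℕ → ℕ)
    (Q : ∀ i, Fin (M i) → (Fin (l i) → Fin (n i) → Fin q) → ℝ)
    (D : ∀ i, Fin (M i) → Finset (Fin (l i) → Fin (n i) → Fin q))
    (hQ : ∀ i j, IsPMF (Q i j))
    (hM : ∀ i, (2 : ℝ) ^ (R i * (n i : ℝ) ^ (l i * (q - 1))) ≤ (M i : ℝ)) :
    1 ≤ Filter.liminf
      (fun i => lamIL q (n i) (l i) (Q i) (D i) + lamIIL q (n i) (l i) (Q i) (D i))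
      Filter.atTop :=
  multiShotStrongConverse_general q hq β R hR n hn l hl M Q D hQ hM
end

section
/- Fix an integer q ≥ 2, a real R with 0 < R < 1, and an integer l > 2/(1−R). For each n, let N = C(n+q−1, q−1) be the number of types on (Fin q)^n, let T* ⊆ (Fin q)^n be a type class of maximal cardinality, and let M_n = ⌈2^{q^{R·n·l}}⌉. Then for all sufficiently large n there exist functions Φ_1, …, Φ_{M_n} : (T*)^{l−1} → Fin N such that for all i ≠ j, |{ȳ ∈ (T*)^{l−1} : Φ_i(ȳ) = Φ_j(ȳ)}| ≤ (2/N)·|T*|^{l−1}. (Such a family realizes an (n, l, M_n) deterministic identification-feedback code for the q-ary uniform permutation channel with λ_1 = 0 and λ_2 ≤ 2/N → 0: the encoder sends a fixed vector of type-class T* in the first l−1 blocks and, on feedback ȳ, sends a representative of the Φ_i(ȳ)-th type class in the last block; the maximum pairwise agreement fraction of the Φ's equals λ_2.) -/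
/-!
The at most `N` type classes partition `(Fin q)^n`, so the largest one has `|T*| ≥ q^n / N` and
`D = |T*|^(l-1)` satisfies `D / N ≥ q^(n(l-1)) / N^l ≥ 8 q^(n(l-2)) ≥ 8 q^(Rnl)` for large `n`,
because `N` is polynomial in `n` and `l(1-R) > 2`. The maps `(T*)^(l-1) → Fin N` are chosen
greedily (Gilbert–Varshamov), each avoiding all maps that agree in at least `s > 2D/N` points
with an earlier one. Markov's inequality for `2^(#agreements)` bounds each such ball by
`(N+1)^D / 2^s`, so the greedy choice succeeds while `M < 2^s (N/(N+1))^D`, and the right-hand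
side is at least `(4/e)^(D/N) > 2^(q^(Rnl)) + 1`.
-/

open Finset

/-- The type (empirical histogram) of a vector `x ∈ (Fin q)^n`. -/
def typeOf (q n : ℕ) (x : Fin n → Fin q) : Fin q → ℕ :=
  fun a => (Finset.univ.filter fun k => x k = a).card

/-- The type class of a type `c : Fin q → ℕ`: all vectors whose coordinate counts
equal `c`. -/
def typeClassOf (q n : ℕ) (c : Fin q → ℕ) : Finset (Fin n → Fin q) :=
  Finset.univ.filter fun x => typeOf q n x = c

theorem Finset.Nat.card_antidiagonalTuple (k n : ℕ) :
    #(antidiagonalTuple k n) = (k + n - 1).choose n := by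
  rw [card_eq_of_equiv_fintype ((Equiv.subtypeEquivRight fun _ => mem_antidiagonalTuple).trans
    (Sym.equivNatSumOfFintype (Fin k) n).symm), Sym.card_sym_eq_choose, Fintype.card_fin]

theorem sum_typeOf (q n : ℕ) (x : Fin n → Fin q) : ∑ a, typeOf q n x a = n := by
  simpa [typeOf] using (card_eq_sum_card_fiberwise (s := univ) fun k _ => mem_univ (x k)).symm

theorem card_image_typeOf_le (q n : ℕ) (hq : 1 ≤ q) :
    #(univ.image (typeOf q n)) ≤ (n + q - 1).choose (q - 1) := by
  have himage : univ.image (typeOf q n) ⊆ Finset.Nat.antidiagonalTuple q n := by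
    simp only [subset_iff, mem_image, mem_univ, true_and, Finset.Nat.mem_antidiagonalTuple]
    rintro _ ⟨x, rfl⟩
    exact sum_typeOf q n x
  calc #(univ.image (typeOf q n)) ≤ (q + n - 1).choose n :=
        (card_le_card himage).trans (Finset.Nat.card_antidiagonalTuple q n).le
    _ = (n + q - 1).choose (q - 1) := by
        rw [add_comm q n]; exact Nat.choose_symm_of_eq_add (by omega)

/-- The type classes partition `(Fin q)^n` into at most `C(n+q-1, q-1)` pieces. -/
theorem pow_le_choose_mul_card_typeClassOf (q n : ℕ) (hq : 1 ≤ q) (c : Fin q → ℕ)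
    (hmax : ∀ c' : Fin q → ℕ, ∑ a, c' a = n → #(typeClassOf q n c') ≤ #(typeClassOf q n c)) :
    q ^ n ≤ (n + q - 1).choose (q - 1) * #(typeClassOf q n c) :=
  calc q ^ n = ∑ c' ∈ univ.image (typeOf q n), #(typeClassOf q n c') := by
        simpa [typeClassOf] using card_eq_sum_card_image (typeOf q n) univ
    _ ≤ ∑ _c' ∈ univ.image (typeOf q n), #(typeClassOf q n c) := by
        refine sum_le_sum fun c' hc' => hmax c' ?_
        obtain ⟨x, -, rfl⟩ := mem_image.1 hc'
        exact sum_typeOf q n x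
    _ ≤ (n + q - 1).choose (q - 1) * #(typeClassOf q n c) := by
        rw [sum_const, smul_eq_mul]
        exact Nat.mul_le_mul_right _ (card_image_typeOf_le q n hq)

theorem exists_pairwise_not_rel_of_mul_lt_card {γ : Type*} [Fintype γ] (r : γ → γ → Prop)
    [DecidableRel r] (hr : ∀ x y, r x y → r y x) (B : ℕ) (hB : ∀ x, #{y | r x y} ≤ B) (M : ℕ)
    (hM : M * B < Fintype.card γ) : ∃ Φ : Fin M → γ, Pairwise fun i j => ¬ r (Φ i) (Φ j) := by
  classical
  induction M with
  | zero => exact ⟨finZeroElim, fun i => i.elim0⟩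
  | succ M ih =>
    obtain ⟨Φ, hΦ⟩ := ih (lt_of_le_of_lt (Nat.mul_le_mul_right _ M.le_succ) hM)
    obtain ⟨g, hg⟩ : ∃ g, ∀ i, ¬ r (Φ i) g := by
      by_contra! hcovered
      have hcover : univ ⊆ univ.biUnion fun i => ({y | r (Φ i) y} : Finset γ) := fun g _ => by
        simpa using hcovered g
      have := ((card_le_card hcover).trans card_biUnion_le).trans
        (sum_le_sum fun i (_ : i ∈ univ) => hB (Φ i))
      simp only [card_univ, sum_const, Fintype.card_fin, smul_eq_mul] at this
      nlinarith
    refine ⟨Fin.snoc Φ g, fun i j hij => ?_⟩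
    induction i using Fin.lastCases with
    | last =>
      induction j using Fin.lastCases with
      | last => exact absurd rfl hij
      | cast j => simpa using mt (hr _ _) (hg j)
    | cast i =>
      induction j using Fin.lastCases with
      | last => simpa using hg i
      | cast j => simpa using hΦ (fun h => hij (congrArg _ h))

section Agreement

variable {α β : Type*} [Fintype α] [DecidableEq α] [Fintype β] [DecidableEq β]

theorem sum_pow_card_agree (t : ℕ) (f : α → β) :
    ∑ g : α → β, t ^ #{y | f y = g y} = (t + (Fintype.card β - 1)) ^ Fintype.card α := by
  have hfiber : ∀ y, ∑ b, (if f y = b then t else 1) = t + (Fintype.card β - 1) := by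
    intro y
    rw [sum_ite, sum_const, sum_const, filter_eq, filter_ne, if_pos (mem_univ _),
      card_erase_of_mem (mem_univ _)]
    simp
  calc ∑ g : α → β, t ^ #{y | f y = g y} = ∑ g : α → β, ∏ y, if f y = g y then t else 1 := by
        simp only [← prod_filter, prod_const]
    _ = (t + (Fintype.card β - 1)) ^ Fintype.card α := by
        rw [← Fintype.prod_sum fun y (b : β) => if f y = b then t else 1,
          prod_congr rfl fun y _ => hfiber y, prod_const, card_univ]

theorem card_agree_ge_mul_pow_le (t s : ℕ) (ht : 1 ≤ t) (f : α → β) :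
    #{g : α → β | s ≤ #{y | f y = g y}} * t ^ s ≤
      (t + (Fintype.card β - 1)) ^ Fintype.card α := by
  rw [← sum_pow_card_agree, ← smul_eq_mul]
  calc #{g : α → β | s ≤ #{y | f y = g y}} • t ^ s
      ≤ ∑ g ∈ {g : α → β | s ≤ #{y | f y = g y}}, t ^ #{y | f y = g y} :=
        card_nsmul_le_sum _ _ _ fun g hg => Nat.pow_le_pow_right ht (mem_filter.1 hg).2
    _ ≤ ∑ g : α → β, t ^ #{y | f y = g y} := sum_le_sum_of_subset (subset_univ _)

/-- A Gilbert–Varshamov bound for codes with few agreements. -/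
theorem exists_pairwise_card_agree_lt (t s M : ℕ) (ht : 1 ≤ t)
    (hM : M * (t + (Fintype.card β - 1)) ^ Fintype.card α <
      t ^ s * Fintype.card β ^ Fintype.card α) :
    ∃ Φ : Fin M → α → β, Pairwise fun i j => #{y | Φ i y = Φ j y} < s := by
  have hts : 0 < t ^ s := Nat.pow_pos ht
  set B := (t + (Fintype.card β - 1)) ^ Fintype.card α / t ^ s
  have hB : ∀ f : α → β, #{g : α → β | s ≤ #{y | f y = g y}} ≤ B := fun f =>
    (Nat.le_div_iff_mul_le hts).2 (card_agree_ge_mul_pow_le t s ht f)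
  have hMB : M * B < Fintype.card (α → β) := by
    rw [Fintype.card_fun]
    refine Nat.lt_of_mul_lt_mul_left (a := t ^ s) ?_
    calc t ^ s * (M * B) = M * (B * t ^ s) := by ring
      _ ≤ M * (t + (Fintype.card β - 1)) ^ Fintype.card α :=
          Nat.mul_le_mul_left _ (Nat.div_mul_le_self _ _)
      _ < _ := hM
  obtain ⟨Φ, hΦ⟩ := exists_pairwise_not_rel_of_mul_lt_card (γ := α → β)
    (fun f g => s ≤ #{y | f y = g y}) (fun f g h => by simpa only [eq_comm] using h) B hB M hMB
  exact ⟨Φ, fun i j hij => not_le.1 (hΦ hij)⟩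

end Agreement

open Real in
theorem mul_succ_pow_lt_two_pow_mul_pow (M N D s : ℕ) (E : ℝ) (hN : 0 < N) (hE : 0 ≤ E)
    (hM : (M : ℝ) ≤ 2 ^ E + 1) (hD : 4 * (E + 1) * N ≤ D) (hs : 2 * D < s * N) :
    M * (N + 1) ^ D < 2 ^ s * N ^ D := by
  have hNpos : (0 : ℝ) < N := by exact_mod_cast hN
  set x : ℝ := D / N
  have hx : 4 * (E + 1) ≤ x := by rwa [le_div_iff₀ hNpos]
  have hsx : 2 * x < s := by rw [← mul_div_assoc, div_lt_iff₀ hNpos]; exact_mod_cast hs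
  have hM' : (M : ℝ) ≤ exp ((E + 1) * log 2) :=
    calc (M : ℝ) ≤ 2 ^ E + 1 := hM
      _ ≤ 2 ^ E * 2 := by linarith [one_le_rpow one_le_two hE]
      _ = exp ((E + 1) * log 2) := by
        rw [← rpow_add_one two_ne_zero, rpow_def_of_pos two_pos, mul_comm]
  have hpow : ((N : ℝ) + 1) ^ D ≤ N ^ D * exp x :=
    calc ((N : ℝ) + 1) ^ D = N ^ D * (1 + 1 / N) ^ D := by
          rw [← mul_pow]; field_simp
      _ ≤ N ^ D * exp (1 / N) ^ D := by
          gcongr; linarith [add_one_le_exp (1 / (N : ℝ))]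
      _ = N ^ D * exp x := by rw [← exp_nat_mul, mul_one_div]
  have hexponent : (E + 1) * log 2 + x < s * log 2 := by
    have hlog := log_two_gt_d9
    have hx0 : 0 ≤ x := by positivity
    -- `s log 2 > 2x log 2 ≥ x + (x/4) log 2` because `7 log 2 ≥ 4`
    nlinarith [mul_lt_mul_of_pos_right hsx (log_pos one_lt_two),
      mul_le_mul_of_nonneg_right hx (log_pos one_lt_two).le]
  have key : (M : ℝ) * (N + 1) ^ D < 2 ^ s * N ^ D :=
    calc (M : ℝ) * (N + 1) ^ D ≤ exp ((E + 1) * log 2) * (N ^ D * exp x) := by gcongr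
      _ = N ^ D * exp ((E + 1) * log 2 + x) := by rw [exp_add]; ring
      _ < N ^ D * exp (s * log 2) := by gcongr
      _ = 2 ^ s * N ^ D := by rw [exp_nat_mul, exp_log two_pos, mul_comm]
  exact_mod_cast key

theorem exists_family_card_agree_mul_le {α β : Type*} [Fintype α] [DecidableEq α] [Fintype β]
    [DecidableEq β] (E : ℝ) (hE : 0 ≤ E) (hβ : 0 < Fintype.card β)
    (hαβ : 4 * (E + 1) * Fintype.card β ≤ Fintype.card α) :
    ∃ Φ : Fin ⌈(2 : ℝ) ^ E⌉₊ → α → β,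
      Pairwise fun i j => #{y | Φ i y = Φ j y} * Fintype.card β ≤ 2 * Fintype.card α := by
  set s := 2 * Fintype.card α / Fintype.card β + 1
  have hcode : ⌈(2 : ℝ) ^ E⌉₊ * (2 + (Fintype.card β - 1)) ^ Fintype.card α <
      2 ^ s * Fintype.card β ^ Fintype.card α := by
    rw [show 2 + (Fintype.card β - 1) = Fintype.card β + 1 by omega]
    refine mul_succ_pow_lt_two_pow_mul_pow _ _ _ s E hβ hE
      (Nat.ceil_lt_add_one (by positivity)).le hαβ ?_
    rw [mul_comm s]
    exact Nat.lt_mul_div_succ _ hβ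
  obtain ⟨Φ, hΦ⟩ := exists_pairwise_card_agree_lt 2 s _ one_le_two hcode
  exact ⟨Φ, fun i j hij => (Nat.le_div_iff_mul_le hβ).1 (Nat.lt_succ_iff.1 (hΦ hij))⟩

theorem four_mul_add_one_mul_le_pow_sub_one (N T P E : ℝ) (l : ℕ) (hl : 2 ≤ l) (hN : 0 < N)
    (hP : 1 ≤ P) (hPNT : P ≤ N * T) (hNP : 8 * N ^ l ≤ P) (hEP : E ≤ P ^ (l - 2)) :
    4 * (E + 1) * N ≤ T ^ (l - 1) := by
  refine le_of_mul_le_mul_right ?_ (pow_pos hN (l - 1))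
  calc 4 * (E + 1) * N * N ^ (l - 1) ≤ 4 * (2 * P ^ (l - 2)) * N ^ l := by
        rw [mul_assoc, ← pow_succ', Nat.sub_add_cancel (by omega : 1 ≤ l)]
        gcongr
        linarith [one_le_pow₀ hP (n := l - 2)]
    _ = P ^ (l - 2) * (8 * N ^ l) := by ring
    _ ≤ P ^ (l - 2) * P := by gcongr
    _ = P ^ (l - 1) := by rw [← pow_succ]; congr 1; omega
    _ ≤ (N * T) ^ (l - 1) := by gcongr
    _ = T ^ (l - 1) * N ^ (l - 1) := by ring

theorem rpow_mul_le_pow_pow_sub_two (q : ℝ) (hq : 1 ≤ q) (R : ℝ) (hR1 : R < 1) (n l : ℕ)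
    (hl : 2 / (1 - R) < l) (hl2 : 2 ≤ l) : q ^ (R * n * l) ≤ (q ^ n) ^ (l - 2) := by
  have hRl : R * l < l - 2 := by
    rw [div_lt_iff₀ (by linarith)] at hl
    linarith
  rw [← pow_mul, ← Real.rpow_natCast]
  refine Real.rpow_le_rpow_of_exponent_le hq ?_
  push_cast [hl2]
  nlinarith [(Nat.cast_nonneg n : (0 : ℝ) ≤ n)]

theorem eventually_eight_mul_choose_pow_le (q l : ℕ) (hq : 2 ≤ q) :
    ∀ᶠ n : ℕ in Filter.atTop, 8 * ((n + q - 1).choose (q - 1) : ℝ) ^ l ≤ (q : ℝ) ^ n := by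
  have hq1 : (1 : ℝ) < q := by exact_mod_cast hq
  have hqq : (0 : ℝ) < (q : ℝ) ^ q := by positivity
  have hsmall := ((tendsto_pow_const_div_const_pow_of_one_lt (q * l) hq1).comp
    (Filter.tendsto_add_atTop_nat q)).eventually
      (gt_mem_nhds (by positivity : 0 < 1 / (8 * (q : ℝ) ^ q)))
  filter_upwards [hsmall] with n hn
  have hchoose : ((n + q - 1).choose (q - 1) : ℝ) ^ l ≤ ((n + q : ℕ) : ℝ) ^ (q * l) := by
    rw [pow_mul]
    gcongr
    exact_mod_cast (Nat.choose_le_pow _ _).trans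
      ((Nat.pow_le_pow_left (by omega) _).trans (Nat.pow_le_pow_right (by omega) (by omega)))
  rw [Function.comp_apply, div_lt_div_iff₀ (by positivity) (by positivity), pow_add] at hn
  nlinarith

theorem feedbackAchievability_general (q : ℕ) (hq : 2 ≤ q)
    (R : ℝ) (hR0 : 0 < R) (hR1 : R < 1)
    (l : ℕ) (hl : 2 / (1 - R) < (l : ℝ))
    (cstar : (n : ℕ) → Fin q → ℕ)
    (hmaximal : ∀ n, ∀ c : Fin q → ℕ, ∑ a, c a = n →
      (typeClassOf q n c).card ≤ (typeClassOf q n (cstar n)).card) :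
    ∀ᶠ n : ℕ in Filter.atTop,
      ∃ Φ : Fin ⌈(2 : ℝ) ^ ((q : ℝ) ^ (R * (n : ℝ) * (l : ℝ)))⌉₊ →
          ((Fin (l - 1) → {x // x ∈ typeClassOf q n (cstar n)}) →
            Fin ((n + q - 1).choose (q - 1))),
        ∀ i j, i ≠ j →
          (((Finset.univ.filter fun yb => Φ i yb = Φ j yb).card : ℝ) ≤
            2 / ((n + q - 1).choose (q - 1) : ℝ) *
              ((typeClassOf q n (cstar n)).card : ℝ) ^ (l - 1)) := by
  have hl2 : 2 ≤ l := by
    have : (2 : ℝ) < l := lt_of_le_of_lt (by rw [le_div_iff₀ (by linarith)]; linarith) hl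
    exact_mod_cast this.le
  have hq1 : (1 : ℝ) ≤ q := by exact_mod_cast (by omega : 1 ≤ q)
  filter_upwards [eventually_eight_mul_choose_pow_le q l hq] with n hNq
  set N := (n + q - 1).choose (q - 1)
  set T := #(typeClassOf q n (cstar n))
  set E := (q : ℝ) ^ (R * n * l)
  have hN : 0 < N := Nat.choose_pos (by omega)
  have hqn : (q : ℝ) ^ n ≤ N * T := by
    exact_mod_cast pow_le_choose_mul_card_typeClassOf q n (by omega) (cstar n) (hmaximal n)
  have hD : 4 * (E + 1) * N ≤ T ^ (l - 1) :=
    four_mul_add_one_mul_le_pow_sub_one N T _ E l hl2 (by exact_mod_cast hN) (one_le_pow₀ hq1)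
      hqn hNq (rpow_mul_le_pow_pow_sub_two q hq1 R hR1 n l hl hl2)
  obtain ⟨Φ, hΦ⟩ := exists_family_card_agree_mul_le
    (α := Fin (l - 1) → {x // x ∈ typeClassOf q n (cstar n)}) (β := Fin N) E (by positivity)
    (by simpa using hN) (by simpa using hD)
  refine ⟨Φ, fun i j hij => ?_⟩
  rw [div_mul_eq_mul_div, le_div_iff₀ (by exact_mod_cast hN)]
  exact_mod_cast (by simpa using hΦ hij)

/-- Feedback achievability: fix `q ≥ 2`, `0 < R < 1` and an integer `l > 2/(1-R)`.
For each `n`, let `N = C(n+q-1, q-1)`, let `T* = typeClassOf q n (cstar n)` be a type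
class of maximal cardinality, and let `M_n = ⌈2^(q^(R·n·l))⌉`.  Then for all sufficiently
large `n` there exist `Φ_1, …, Φ_{M_n} : (T*)^(l-1) → Fin N` whose pairwise agreement sets
have size at most `(2/N)·|T*|^(l-1)`. -/
theorem feedbackAchievability (q : ℕ) (hq : 2 ≤ q)
    (R : ℝ) (hR0 : 0 < R) (hR1 : R < 1)
    (l : ℕ) (hl : 2 / (1 - R) < (l : ℝ))
    (cstar : (n : ℕ) → Fin q → ℕ)
    (hsum : ∀ n, ∑ a, cstar n a = n)
    (hmaximal : ∀ n, ∀ c : Fin q → ℕ, ∑ a, c a = n →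
      (typeClassOf q n c).card ≤ (typeClassOf q n (cstar n)).card) :
    ∀ᶠ n : ℕ in Filter.atTop,
      ∃ Φ : Fin ⌈(2 : ℝ) ^ ((q : ℝ) ^ (R * (n : ℝ) * (l : ℝ)))⌉₊ →
          ((Fin (l - 1) → {x // x ∈ typeClassOf q n (cstar n)}) →
            Fin ((n + q - 1).choose (q - 1))),
        ∀ i j, i ≠ j →
          (((Finset.univ.filter fun yb => Φ i yb = Φ j yb).card : ℝ) ≤
            2 / ((n + q - 1).choose (q - 1) : ℝ) *
              ((typeClassOf q n (cstar n)).card : ℝ) ^ (l - 1)) :=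
  feedbackAchievability_general q hq R hR0 hR1 l hl cstar hmaximal
end
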